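/- Let a > 0 and let (u(s), v(s)) solve the system (S) on some interval (0, s₀] with initial data u(0)=0, v(0)=a, u'(0)=1, v'(0)=0 (and u, v ∈ C²([0,s₀]), u'² + v'² = 1). Then for all s ∈ (0, s₀] the curvature k = -v'u'' + u'v'' satisfies k(s) = -v'(s)/u(s) - (e^{(u(s)² + v(s)²)/2} / u(s)) ∫₀ˢ e^{-(u(t)² + v(t)²)/2} v(t) dt. -/

import Mathlib

open Set

/-- First derivative within `[0, s₀]`. -/
noncomputable def d1 (s₀ : ℝ) (f : ℝ → ℝ) : ℝ → ℝ := derivWithin f (Icc 0 s₀)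

/-- Second derivative within `[0, s₀]`. -/
noncomputable def d2 (s₀ : ℝ) (f : ℝ → ℝ) : ℝ → ℝ := derivWithin (d1 s₀ f) (Icc 0 s₀)

/-- `(u, v)` is a `C²([0, s₀])`, arclength-parametrized solution of the system (S)
`u'' = -v'²(u - 1/u) + u'v'v`, `v'' = v'u'(u - 1/u) - u'²v` on `(0, s₀]`,
with initial data `u(0) = 0`, `v(0) = a`, `u'(0) = 1`, `v'(0) = 0`. -/
def IsSolS (a s₀ : ℝ) (u v : ℝ → ℝ) : Prop :=
  ContDiffOn ℝ 2 u (Icc 0 s₀) ∧ ContDiffOn ℝ 2 v (Icc 0 s₀) ∧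
  u 0 = 0 ∧ v 0 = a ∧ d1 s₀ u 0 = 1 ∧ d1 s₀ v 0 = 0 ∧
  (∀ s ∈ Icc (0:ℝ) s₀, (d1 s₀ u s) ^ 2 + (d1 s₀ v s) ^ 2 = 1) ∧
  (∀ s ∈ Ioc (0:ℝ) s₀,
    d2 s₀ u s = -(d1 s₀ v s) ^ 2 * (u s - 1 / u s) + d1 s₀ u s * d1 s₀ v s * v s ∧
    d2 s₀ v s = d1 s₀ v s * d1 s₀ u s * (u s - 1 / u s) - (d1 s₀ u s) ^ 2 * v s)

open Filter Topology

/-! Clearing the denominator of (S) gives `u u'' = v'²(1 - u²) + u u' v' v` and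
`u v'' = u' v' (u² - 1) - u u'² v`, hence `u k = (u² - 1) v' - u u' v`, and
`F = e^{-(u²+v²)/2} u (u v' - u' v)` satisfies `F' = -e^{-(u²+v²)/2} v`, `F(0) = 0`.
Integrating gives the formula wherever `u(s) ≠ 0`.

Since `1 / 0 = 0`, (S) read literally at a zero of `u` is not its cleared form, and the
right-hand side of the formula is the junk value `0` there. The cleared first equation holds
at `s = 0` and propagates by real induction: at a zero of `u` it forces `v' = 0`, hence
`u' = ±1`, so `u ≠ 0` just to the right of it. At a zero `s` of `u` the curvature is then the
limit of `u v' - v'/u - u' v`, which is `0` by l'Hôpital. -/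

section Regularity

variable {s₀ : ℝ} {f : ℝ → ℝ}

lemma hasDerivWithinAt_d1 (hf : DifferentiableOn ℝ f (Icc 0 s₀)) {t : ℝ} (ht : t ∈ Icc 0 s₀) :
    HasDerivWithinAt f (d1 s₀ f t) (Icc 0 s₀) t :=
  (hf t ht).hasDerivWithinAt

lemma contDiffOn_d1 (hs₀ : 0 < s₀) (hf : ContDiffOn ℝ 2 f (Icc 0 s₀)) :
    ContDiffOn ℝ 1 (d1 s₀ f) (Icc 0 s₀) :=
  hf.derivWithin (uniqueDiffOn_Icc hs₀) (by norm_num)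

lemma hasDerivWithinAt_d2 (hs₀ : 0 < s₀) (hf : ContDiffOn ℝ 2 f (Icc 0 s₀)) {t : ℝ}
    (ht : t ∈ Icc 0 s₀) : HasDerivWithinAt (d1 s₀ f) (d2 s₀ f t) (Icc 0 s₀) t :=
  hasDerivWithinAt_d1 ((contDiffOn_d1 hs₀ hf).differentiableOn one_ne_zero) ht

lemma continuousOn_d2 (hs₀ : 0 < s₀) (hf : ContDiffOn ℝ 2 f (Icc 0 s₀)) :
    ContinuousOn (d2 s₀ f) (Icc 0 s₀) :=
  ((contDiffOn_d1 hs₀ hf).continuousOn_derivWithin (uniqueDiffOn_Icc hs₀) le_rfl)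

end Regularity

lemma HasDerivWithinAt.tendsto_div_of_eq_zero {f g : ℝ → ℝ} {f' g' x : ℝ} {s : Set ℝ}
    (hf : HasDerivWithinAt f f' s x) (hg : HasDerivWithinAt g g' s x) (hfx : f x = 0)
    (hgx : g x = 0) (hg' : g' ≠ 0) :
    Tendsto (fun t => f t / g t) (𝓝[s \ {x}] x) (𝓝 (f' / g')) := by
  refine ((hasDerivWithinAt_iff_tendsto_slope.1 hf).div
    (hasDerivWithinAt_iff_tendsto_slope.1 hg) hg').congr' ?_
  filter_upwards [self_mem_nhdsWithin] with t ht
  have : t - x ≠ 0 := sub_ne_zero.2 ht.2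
  simp only [Pi.div_apply, slope_def_field, hfx, hgx, sub_zero]
  field_simp

noncomputable def curvature (s₀ : ℝ) (u v : ℝ → ℝ) (t : ℝ) : ℝ :=
  -d1 s₀ v t * d2 s₀ u t + d1 s₀ u t * d2 s₀ v t

noncomputable def weightedMoment (s₀ : ℝ) (u v : ℝ → ℝ) (t : ℝ) : ℝ :=
  Real.exp (-(u t ^ 2 + v t ^ 2) / 2) * (u t * (u t * d1 s₀ v t - d1 s₀ u t * v t))

section Solution

variable {a s₀ : ℝ} {u v : ℝ → ℝ}

lemma IsSolS.u_mul_d2_u_eq (hs₀ : 0 < s₀) (hsol : IsSolS a s₀ u v) :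
    ∀ t ∈ Icc 0 s₀, u t * d2 s₀ u t
      = d1 s₀ v t ^ 2 * (1 - u t ^ 2) + u t * d1 s₀ u t * d1 s₀ v t * v t := by
  obtain ⟨hu, hv, hu0, -, -, hv10, hunit, hode⟩ := hsol
  let S : Set ℝ := {t | u t * d2 s₀ u t
      = d1 s₀ v t ^ 2 * (1 - u t ^ 2) + u t * d1 s₀ u t * d1 s₀ v t * v t}
  have hcu := hu.continuousOn
  have hcv := hv.continuousOn
  have hcu1 := (contDiffOn_d1 hs₀ hu).continuousOn
  have hcv1 := (contDiffOn_d1 hs₀ hv).continuousOn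
  have hcu2 := continuousOn_d2 hs₀ hu
  have hclosed : IsClosed (S ∩ Icc 0 s₀) := by
    rw [inter_comm]
    exact ContinuousOn.preimage_isClosed_of_isClosed
      (f := fun t => (u t * d2 s₀ u t,
        d1 s₀ v t ^ 2 * (1 - u t ^ 2) + u t * d1 s₀ u t * d1 s₀ v t * v t))
      (by fun_prop) isClosed_Icc isClosed_diagonal
  refine hclosed.Icc_subset_of_forall_mem_nhdsWithin (by simp [S, hu0, hv10]) ?_
  rintro x ⟨hxS, hx⟩
  have hd : HasDerivWithinAt u (d1 s₀ u x) (Ioi x) x :=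
    (hasDerivWithinAt_d1 (hu.differentiableOn two_ne_zero)
      (Ico_subset_Icc_self hx)).mono_of_mem_nhdsWithin (Icc_mem_nhdsGT_of_mem hx)
  have hne : ∀ᶠ t in 𝓝[>] x, u t ≠ 0 := by
    by_cases hux : u x = 0
    · have hv1 : d1 s₀ v x = 0 := by simpa [S, hux, eq_comm] using hxS
      have hu1 : d1 s₀ u x ≠ 0 := by
        have := hunit x (Ico_subset_Icc_self hx)
        rintro h
        simp [h, hv1] at this
      simpa using hd.eventually_ne (c := 0) hu1
    · exact hd.continuousWithinAt.eventually_ne hux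
  filter_upwards [hne, Ioc_mem_nhdsGT hx.2] with t hut ht
  have hodet := (hode t ⟨hx.1.trans_lt ht.1, ht.2⟩).1
  simp only [S, mem_ofPred_eq, hodet]
  field_simp
  ring

lemma IsSolS.d1_v_eq_zero_of_u_eq_zero (hs₀ : 0 < s₀) (hsol : IsSolS a s₀ u v) {t : ℝ}
    (ht : t ∈ Icc 0 s₀) (hut : u t = 0) : d1 s₀ v t = 0 := by
  simpa [hut, eq_comm] using hsol.u_mul_d2_u_eq hs₀ t ht

lemma IsSolS.d1_u_ne_zero_of_u_eq_zero (hs₀ : 0 < s₀) (hsol : IsSolS a s₀ u v) {t : ℝ}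
    (ht : t ∈ Icc 0 s₀) (hut : u t = 0) : d1 s₀ u t ≠ 0 := by
  have hunit := hsol.2.2.2.2.2.2.1 t ht
  rintro h
  simp [h, hsol.d1_v_eq_zero_of_u_eq_zero hs₀ ht hut] at hunit

lemma IsSolS.u_mul_d2_v_eq (hs₀ : 0 < s₀) (hsol : IsSolS a s₀ u v) :
    ∀ t ∈ Ioc 0 s₀, u t * d2 s₀ v t
      = d1 s₀ u t * d1 s₀ v t * (u t ^ 2 - 1) - u t * d1 s₀ u t ^ 2 * v t := by
  intro t ht
  rw [(hsol.2.2.2.2.2.2.2 t ht).2]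
  by_cases hut : u t = 0
  · simp [hut, hsol.d1_v_eq_zero_of_u_eq_zero hs₀ (Ioc_subset_Icc_self ht) hut]
  · field_simp

lemma IsSolS.u_mul_curvature (hs₀ : 0 < s₀) (hsol : IsSolS a s₀ u v) :
    ∀ t ∈ Ioc 0 s₀,
      u t * curvature s₀ u v t = (u t ^ 2 - 1) * d1 s₀ v t - u t * d1 s₀ u t * v t := by
  intro t ht
  have hunit := hsol.2.2.2.2.2.2.1 t (Ioc_subset_Icc_self ht)
  unfold curvature
  linear_combination -d1 s₀ v t * hsol.u_mul_d2_u_eq hs₀ t (Ioc_subset_Icc_self ht)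
    + d1 s₀ u t * hsol.u_mul_d2_v_eq hs₀ t ht
    + ((u t ^ 2 - 1) * d1 s₀ v t - u t * d1 s₀ u t * v t) * hunit

lemma IsSolS.curvature_eq_zero_of_u_eq_zero (hs₀ : 0 < s₀) (hsol : IsSolS a s₀ u v) {s : ℝ}
    (hs : s ∈ Ioc 0 s₀) (hus : u s = 0) : curvature s₀ u v s = 0 := by
  have hsI : s ∈ Icc 0 s₀ := Ioc_subset_Icc_self hs
  have hv1 := hsol.d1_v_eq_zero_of_u_eq_zero hs₀ hsI hus
  have hu1 := hsol.d1_u_ne_zero_of_u_eq_zero hs₀ hsI hus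
  have hv2 : d2 s₀ v s = -d1 s₀ u s ^ 2 * v s := by
    simpa [hus, hv1] using (hsol.2.2.2.2.2.2.2 s hs).2
  have hu := hsol.1
  have hv := hsol.2.1
  have hL : 𝓝[<] s ≤ 𝓝[Icc 0 s₀ \ {s}] s := nhdsWithin_le_of_mem <|
    mem_of_superset (Ioo_mem_nhdsLT hs.1) fun t ht => ⟨⟨ht.1.le, ht.2.le.trans hs.2⟩, ht.2.ne⟩
  have hL' : 𝓝[<] s ≤ 𝓝[Icc 0 s₀] s := hL.trans (nhdsWithin_mono _ sdiff_subset)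
  have hdu := hasDerivWithinAt_d1 (hu.differentiableOn two_ne_zero) hsI
  have hcu := hu.continuousOn s hsI
  have hcv := hv.continuousOn s hsI
  have hcu1 := (contDiffOn_d1 hs₀ hu).continuousOn s hsI
  have hcv1 := (contDiffOn_d1 hs₀ hv).continuousOn s hsI
  have hquot := (hasDerivWithinAt_d2 hs₀ hv hsI).tendsto_div_of_eq_zero hdu hv1 hus hu1
  have hlim : Tendsto (fun t => u t * d1 s₀ v t - d1 s₀ v t / u t - d1 s₀ u t * v t) (𝓝[<] s)
      (𝓝 (u s * d1 s₀ v s - d2 s₀ v s / d1 s₀ u s - d1 s₀ u s * v s)) :=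
    (((hcu.mul hcv1).tendsto.mono_left hL').sub (hquot.mono_left hL)).sub
      ((hcu1.mul hcv).tendsto.mono_left hL')
  have hk : Tendsto (curvature s₀ u v) (𝓝[<] s) (𝓝 (curvature s₀ u v s)) :=
    ((hcv1.neg.mul (continuousOn_d2 hs₀ hu s hsI)).add
      (hcu1.mul (continuousOn_d2 hs₀ hv s hsI))).tendsto.mono_left hL'
  have hkeq :
      curvature s₀ u v s = u s * d1 s₀ v s - d2 s₀ v s / d1 s₀ u s - d1 s₀ u s * v s := by
    refine tendsto_nhds_unique hk (hlim.congr' ?_)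
    filter_upwards [hL (hdu.eventually_ne (c := 0) hu1), Ioo_mem_nhdsLT hs.1] with t hut ht
    have := hsol.u_mul_curvature hs₀ t ⟨ht.1, ht.2.le.trans hs.2⟩
    field_simp
    linear_combination -this
  rw [hkeq, hv2, hus, hv1]
  field_simp
  ring

lemma IsSolS.hasDerivWithinAt_weightedMoment (hs₀ : 0 < s₀) (hsol : IsSolS a s₀ u v) {t : ℝ}
    (ht : t ∈ Ioc 0 s₀) :
    HasDerivWithinAt (weightedMoment s₀ u v) (-(Real.exp (-(u t ^ 2 + v t ^ 2) / 2) * v t))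
      (Icc 0 s₀) t := by
  have htI : t ∈ Icc 0 s₀ := Ioc_subset_Icc_self ht
  have hu := hasDerivWithinAt_d1 (hsol.1.differentiableOn two_ne_zero) htI
  have hv := hasDerivWithinAt_d1 (hsol.2.1.differentiableOn two_ne_zero) htI
  have hu1 := hasDerivWithinAt_d2 hs₀ hsol.1 htI
  have hv1 := hasDerivWithinAt_d2 hs₀ hsol.2.1 htI
  have hunit := hsol.2.2.2.2.2.2.1 t htI
  have hE := (((hu.pow 2).add (hv.pow 2)).neg.div_const 2).exp
  refine (hE.mul (hu.mul ((hu.mul hv1).sub (hu1.mul hv)))).congr_deriv ?_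
  simp only [Pi.mul_apply, Pi.sub_apply, Pi.add_apply, Pi.neg_apply, Pi.pow_apply,
    Nat.cast_ofNat, Nat.add_one_sub_one, pow_one]
  linear_combination Real.exp (-(u t ^ 2 + v t ^ 2) / 2) *
    (u t * hsol.u_mul_d2_v_eq hs₀ t ht - v t * hsol.u_mul_d2_u_eq hs₀ t htI
      - v t * hunit)

lemma IsSolS.integral_eq_neg_weightedMoment (hs₀ : 0 < s₀) (hsol : IsSolS a s₀ u v) {s : ℝ}
    (hs : s ∈ Ioc 0 s₀) :
    ∫ t in (0:ℝ)..s, Real.exp (-(u t ^ 2 + v t ^ 2) / 2) * v t = -weightedMoment s₀ u v s := by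
  have hsub : Icc 0 s ⊆ Icc 0 s₀ := Icc_subset_Icc_right hs.2
  have hcu := hsol.1.continuousOn
  have hcv := hsol.2.1.continuousOn
  have hcu1 := (contDiffOn_d1 hs₀ hsol.1).continuousOn
  have hcv1 := (contDiffOn_d1 hs₀ hsol.2.1).continuousOn
  have hF : ContinuousOn (weightedMoment s₀ u v) (Icc 0 s₀) := by
    unfold weightedMoment
    fun_prop
  have hint : IntervalIntegrable (fun t => -(Real.exp (-(u t ^ 2 + v t ^ 2) / 2) * v t))
      MeasureTheory.volume 0 s := by
    refine ContinuousOn.intervalIntegrable ?_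
    rw [uIcc_of_le hs.1.le]
    exact ContinuousOn.mono (by fun_prop) hsub
  have hFTC := intervalIntegral.integral_eq_sub_of_hasDerivAt_of_le hs.1.le (hF.mono hsub)
    (fun t ht => (hsol.hasDerivWithinAt_weightedMoment hs₀ ⟨ht.1, ht.2.le.trans hs.2⟩).hasDerivAt
      (Icc_mem_nhds ht.1 (ht.2.trans_le hs.2))) hint
  have hF0 : weightedMoment s₀ u v 0 = 0 := by simp [weightedMoment, hsol.2.2.1]
  rw [intervalIntegral.integral_neg, hF0, sub_zero] at hFTC
  linarith

end Solution

theorem curvature_second_formula_general (a s₀ : ℝ)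
    (u v : ℝ → ℝ) (hsol : IsSolS a s₀ u v) :
    ∀ s ∈ Ioc (0:ℝ) s₀,
      -(d1 s₀ v s) * d2 s₀ u s + d1 s₀ u s * d2 s₀ v s
        = -(d1 s₀ v s) / u s
          - Real.exp ((u s ^ 2 + v s ^ 2) / 2) / u s
            * ∫ t in (0:ℝ)..s, Real.exp (-(u t ^ 2 + v t ^ 2) / 2) * v t := by
  intro s hs
  have hs₀ : 0 < s₀ := hs.1.trans_le hs.2
  change curvature s₀ u v s = _
  rw [hsol.integral_eq_neg_weightedMoment hs₀ hs, weightedMoment]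
  by_cases hus : u s = 0
  · simp [hsol.curvature_eq_zero_of_u_eq_zero hs₀ hs hus, hus]
  · rw [neg_div 2 (u s ^ 2 + v s ^ 2), Real.exp_neg]
    field_simp
    linear_combination hsol.u_mul_curvature hs₀ s hs

/-- Along any solution of (S) with the given initial data, the curvature
`k = -v'u'' + u'v''` satisfies
`k(s) = -v'(s)/u(s) - (e^{(u²+v²)(s)/2}/u(s)) ∫₀ˢ e^{-(u²+v²)/2} v dt`. -/
theorem curvature_second_formula (a s₀ : ℝ) (ha : 0 < a) (hs₀ : 0 < s₀)
    (u v : ℝ → ℝ) (hsol : IsSolS a s₀ u v) :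
    ∀ s ∈ Ioc (0:ℝ) s₀,
      -(d1 s₀ v s) * d2 s₀ u s + d1 s₀ u s * d2 s₀ v s
        = -(d1 s₀ v s) / u s
          - Real.exp ((u s ^ 2 + v s ^ 2) / 2) / u s
            * ∫ t in (0:ℝ)..s, Real.exp (-(u t ^ 2 + v t ^ 2) / 2) * v t :=
  curvature_second_formula_general a s₀ u v hsol
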